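/- Let n = 2^m with m ≥ 2, let C0 be an even binary (n, 2^(n-1)/n, 4) code and C1 an odd binary (n, 2^(n-1)/n, 4) code. Then there exists a set C ⊆ X^n with |C| = 2^(n-1)/n, pairwise Hamming distances at least 3 between distinct words, e(C) = C0 and o(C) = C1. -/

import Mathlib

/-- A ternary word has exactly one coordinate equal to 0 (the `*` symbol). -/
def exactlyOneStar {n : ℕ} (x : Fin n → Fin 3) : Prop :=
  (Finset.univ.filter (fun i => x i = 0)).card = 1

/-- The binary word associated to a ternary word `x`, where the value `1` of `x`
represents the binary `0`, the value `2` represents the binary `1`, and the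
coordinates where `x` is `0` (the `*`) get the value `v`. -/
def binPart {n : ℕ} (x : Fin n → Fin 3) (v : Fin 2) : Fin n → Fin 2 :=
  fun i => if x i = 0 then v else if x i = 2 then 1 else 0

/-- The (Hamming) weight of a binary word: the number of 1s. -/
def wt {n : ℕ} (y : Fin n → Fin 2) : ℕ :=
  (Finset.univ.filter (fun i => y i = 1)).card

/-- The even-weight binary word `e(x)` determined by `x ∈ Xⁿ`. -/
def eWord {n : ℕ} (x : Fin n → Fin 3) : Fin n → Fin 2 :=
  if wt (binPart x 0) % 2 = 0 then binPart x 0 else binPart x 1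

/-- The odd-weight binary word `o(x)` determined by `x ∈ Xⁿ`. -/
def oWord {n : ℕ} (x : Fin n → Fin 3) : Fin n → Fin 2 :=
  if wt (binPart x 0) % 2 = 0 then binPart x 1 else binPart x 0

/-!
Since `C0` has minimum distance at least 3, the radius-one spheres around its codewords are
disjoint; they consist of odd words and contain `n * |C0| = 2^(n-1)` words in total, so they cover
every odd word. Hence each `c1 ∈ C1` is `c0 + eᵢ` for some `c0 ∈ C0`, and the ternary word that
agrees with `c0` off `i` and has its star at `i` has `e = c0` and `o = c1`. Off the stars, `x` and
`y` differ exactly where `o(x)` and `o(y)` do, and if the stars coincide only one disagreement is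
lost, so distance 4 in `C1` gives distance 3 in the ternary code. Finally `e` is injective on the
code because `e(x)` and `o(x)` are at distance 1 while `C1` has minimum distance 4.
-/

open Finset

variable {n : ℕ}

theorem hammingDist_binPart_le (x y : Fin n → Fin 3) (v w : Fin 2) :
    hammingDist (binPart x v) (binPart y w) ≤ hammingDist x y + #{i | y i = 0} := by
  calc hammingDist (binPart x v) (binPart y w)
      ≤ hammingDist (binPart x v) (binPart y v) + hammingDist (binPart y v) (binPart y w) :=
        hammingDist_triangle _ _ _
    _ ≤ hammingDist x y + #{i | y i = 0} := by
        gcongr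
        · exact hammingDist_comp_le_hammingDist
            (fun _ t => if t = 0 then v else if t = 2 then 1 else 0)
        · refine card_le_card fun i => ?_
          simp only [mem_filter, mem_univ, true_and]
          intro hi
          by_contra h
          simp [binPart, h] at hi

theorem exists_eWord_eq_binPart (x : Fin n → Fin 3) : ∃ v, eWord x = binPart x v := by
  unfold eWord; split <;> exact ⟨_, rfl⟩

theorem exists_oWord_eq_binPart (x : Fin n → Fin 3) : ∃ v, oWord x = binPart x v := by
  unfold oWord; split <;> exact ⟨_, rfl⟩

theorem hammingDist_oWord_le {x y : Fin n → Fin 3} (hy : exactlyOneStar y) :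
    hammingDist (oWord x) (oWord y) ≤ hammingDist x y + 1 := by
  obtain ⟨v, hv⟩ := exists_oWord_eq_binPart x
  obtain ⟨w, hw⟩ := exists_oWord_eq_binPart y
  rw [hv, hw, ← hy]
  exact hammingDist_binPart_le x y v w

theorem hammingDist_eWord_oWord_le {x : Fin n → Fin 3} (hx : exactlyOneStar x) :
    hammingDist (eWord x) (oWord x) ≤ 1 := by
  obtain ⟨v, hv⟩ := exists_eWord_eq_binPart x
  obtain ⟨w, hw⟩ := exists_oWord_eq_binPart x
  have h := hammingDist_binPart_le x x v w
  rwa [hammingDist_self, zero_add, hx, ← hv, ← hw] at h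

theorem eWord_eq_and_oWord_eq {x : Fin n → Fin 3} {v : Fin 2} (hv : wt (binPart x v) % 2 = 0)
    (hv' : wt (binPart x (v + 1)) % 2 = 1) :
    eWord x = binPart x v ∧ oWord x = binPart x (v + 1) := by
  fin_cases v <;> simp_all [eWord, oWord]

open Fin.CommRing in
theorem natCast_wt (y : Fin n → Fin 2) : ((wt y : ℕ) : Fin 2) = ∑ i, y i := by
  rw [wt, card_filter, Nat.cast_sum]
  refine sum_congr rfl fun i _ => ?_
  generalize y i = a
  fin_cases a <;> rfl

open Fin.CommRing in
theorem wt_add_single_mod_two (c : Fin n → Fin 2) (i : Fin n) :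
    wt (c + Pi.single i 1) % 2 = (wt c + 1) % 2 := by
  rw [← Fin.val_natCast, ← Fin.val_natCast, natCast_wt, Nat.cast_succ, natCast_wt]
  simp [sum_add_distrib]

theorem hammingDist_add_single (c : Fin n → Fin 2) (i : Fin n) :
    hammingDist c (c + Pi.single i 1) = 1 := by
  rw [hammingDist_eq_hammingNorm, neg_add_cancel_left]
  simp [hammingNorm, Pi.single_apply, filter_eq']

/-- `Fin.succ` encodes the binary values `0, 1` as the ternary symbols `1, 2`. -/
def starAt (c : Fin n → Fin 2) (i : Fin n) : Fin n → Fin 3 :=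
  Function.update (fun j => (c j).succ) i 0

theorem exactlyOneStar_starAt (c : Fin n → Fin 2) (i : Fin n) : exactlyOneStar (starAt c i) := by
  simp [exactlyOneStar, starAt, Function.update_apply, Fin.succ_ne_zero, filter_eq']

theorem binPart_starAt (c : Fin n → Fin 2) (i : Fin n) (v : Fin 2) :
    binPart (starAt c i) v = Function.update c i v := by
  ext j
  rcases eq_or_ne j i with rfl | hj
  · simp [binPart, starAt]
  · simp only [binPart, starAt, Function.update_of_ne hj, Fin.succ_ne_zero, if_false]
    generalize c j = a
    fin_cases a <;> rfl

theorem eWord_starAt_and_oWord_starAt {c : Fin n → Fin 2} (hc : wt c % 2 = 0) (i : Fin n) :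
    eWord (starAt c i) = c ∧ oWord (starAt c i) = c + Pi.single i 1 := by
  have h₀ : binPart (starAt c i) (c i) = c := by
    rw [binPart_starAt, Function.update_eq_self]
  have h₁ : binPart (starAt c i) (c i + 1) = c + Pi.single i 1 := by
    ext j
    rcases eq_or_ne j i with rfl | hj <;> simp [binPart_starAt, *]
  have := eWord_eq_and_oWord_eq (x := starAt c i) (v := c i) (by rwa [h₀])
    (by rw [h₁, wt_add_single_mod_two, Nat.add_mod, hc])
  rwa [h₀, h₁] at this

theorem add_single_add_single (c : Fin n → Fin 2) (i : Fin n) :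
    c + Pi.single i 1 + Pi.single i 1 = c := by
  rw [add_assoc, ← Pi.single_add, show (1 + 1 : Fin 2) = 0 from rfl, Pi.single_zero, add_zero]

theorem card_filter_wt_mod_two_eq_one (hn : 0 < n) :
    #{y : Fin n → Fin 2 | wt y % 2 = 1} = 2 ^ (n - 1) := by
  let i : Fin n := ⟨0, hn⟩
  have hswap : #{y : Fin n → Fin 2 | wt y % 2 = 1} = #{y : Fin n → Fin 2 | ¬wt y % 2 = 1} := by
    refine card_nbij' (· + Pi.single i 1) (· + Pi.single i 1) ?_ ?_ ?_ ?_ <;>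
      intro y <;> simp [wt_add_single_mod_two, add_single_add_single] <;> omega
  have htotal := card_filter_add_card_filter_not (s := (univ : Finset (Fin n → Fin 2)))
    (fun y => wt y % 2 = 1)
  rw [← hswap, card_univ, Fintype.card_fun, Fintype.card_fin, Fintype.card_fin,
    ← Nat.two_pow_pred_add_two_pow_pred hn] at htotal
  omega

theorem injOn_add_single {C : Finset (Fin n → Fin 2)}
    (hC : ∀ x ∈ C, ∀ y ∈ C, x ≠ y → 3 ≤ hammingDist x y) :
    Set.InjOn (fun p : (Fin n → Fin 2) × Fin n => p.1 + Pi.single p.2 1)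
      ↑(C ×ˢ univ : Finset ((Fin n → Fin 2) × Fin n)) := by
  rintro ⟨c, i⟩ hci ⟨c', i'⟩ hci' h
  simp only [coe_product, Set.mem_prod, mem_coe] at hci hci' h
  have hc : c = c' := by
    by_contra hne
    have := hC c hci.1 c' hci'.1 hne
    have : hammingDist c c' ≤ 2 := calc
      hammingDist c c'
        ≤ hammingDist c (c + Pi.single i 1) + hammingDist (c' + Pi.single i' 1) c' := by
          rw [h]; exact hammingDist_triangle _ _ _
      _ = 2 := by rw [hammingDist_comm _ c', hammingDist_add_single, hammingDist_add_single]
    omega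
  subst hc
  obtain rfl : i = i' := by simpa [Pi.single_apply] using congrFun (add_left_cancel h) i
  rfl

theorem hammingDist_oWord_le_hammingDist_eWord_add_two {x y : Fin n → Fin 3}
    (hx : exactlyOneStar x) (hy : exactlyOneStar y) :
    hammingDist (oWord x) (oWord y) ≤ hammingDist (eWord x) (eWord y) + 2 := by
  have hx' := hammingDist_eWord_oWord_le hx
  have hy' := hammingDist_eWord_oWord_le hy
  have h₁ := hammingDist_triangle (oWord x) (eWord x) (oWord y)
  have h₂ := hammingDist_triangle (eWord x) (eWord y) (oWord y)
  rw [hammingDist_comm] at hx'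
  omega

variable {C₀ C₁ : Finset (Fin n → Fin 2)}

theorem exists_add_single_eq (heven : ∀ c ∈ C₀, wt c % 2 = 0)
    (hdist : ∀ x ∈ C₀, ∀ y ∈ C₀, x ≠ y → 3 ≤ hammingDist x y) (hcard : #C₀ * n = 2 ^ (n - 1))
    {y : Fin n → Fin 2} (hy : wt y % 2 = 1) : ∃ c ∈ C₀, ∃ i, c + Pi.single i 1 = y := by
  have hn : 0 < n := Nat.pos_of_ne_zero <| by rintro rfl; simp at hcard
  have hsub : (C₀ ×ˢ univ).image (fun p => p.1 + Pi.single p.2 1) ⊆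
      ({y | wt y % 2 = 1} : Finset (Fin n → Fin 2)) := by
    simp only [subset_iff, mem_image, mem_product, mem_univ, and_true, mem_filter, true_and]
    rintro _ ⟨⟨c, i⟩, hc, rfl⟩
    rw [wt_add_single_mod_two, Nat.add_mod, heven c hc]
  have hcover := eq_of_subset_of_card_le hsub <| by
    rw [card_image_of_injOn (injOn_add_single hdist), card_product, card_univ, Fintype.card_fin,
      hcard, card_filter_wt_mod_two_eq_one hn]
  have hy' : y ∈ ({y | wt y % 2 = 1} : Finset (Fin n → Fin 2)) := by simpa using hy
  rw [← hcover] at hy'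
  simpa using hy'

theorem exists_eWord_mem_oWord_eq (heven : ∀ c ∈ C₀, wt c % 2 = 0)
    (hdist : ∀ x ∈ C₀, ∀ y ∈ C₀, x ≠ y → 3 ≤ hammingDist x y) (hcard : #C₀ * n = 2 ^ (n - 1))
    {y : Fin n → Fin 2} (hy : wt y % 2 = 1) :
    ∃ x, exactlyOneStar x ∧ eWord x ∈ C₀ ∧ oWord x = y := by
  obtain ⟨c, hc, i, rfl⟩ := exists_add_single_eq heven hdist hcard hy
  obtain ⟨he, ho⟩ := eWord_starAt_and_oWord_starAt (heven c hc) i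
  exact ⟨starAt c i, exactlyOneStar_starAt c i, by rwa [he], ho⟩

theorem exists_code_of_lifts (hdist : ∀ x ∈ C₁, ∀ y ∈ C₁, x ≠ y → 4 ≤ hammingDist x y)
    (hcard : #C₀ = #C₁) (hlift : ∀ y ∈ C₁, ∃ x, exactlyOneStar x ∧ eWord x ∈ C₀ ∧ oWord x = y) :
    ∃ C : Finset (Fin n → Fin 3), (∀ x ∈ C, exactlyOneStar x) ∧ #C = #C₁ ∧
      (∀ x ∈ C, ∀ y ∈ C, x ≠ y → 3 ≤ hammingDist x y) ∧
      C.image eWord = C₀ ∧ C.image oWord = C₁ := by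
  choose! τ hstar he ho using hlift
  have hinj : Set.InjOn τ C₁ := fun a ha b hb h => by rw [← ho a ha, ← ho b hb, h]
  have heinj : Set.InjOn (eWord ∘ τ) C₁ := by
    intro a ha b hb h
    by_contra hab
    have := hammingDist_oWord_le_hammingDist_eWord_add_two (hstar a ha) (hstar b hb)
    simp only [Function.comp_apply] at h
    rw [ho a ha, ho b hb, h, hammingDist_self] at this
    have := hdist a ha b hb hab
    omega
  refine ⟨C₁.image τ, by simpa using hstar, card_image_of_injOn hinj, ?_, ?_, ?_⟩
  · simp only [mem_image]
    rintro _ ⟨a, ha, rfl⟩ _ ⟨b, hb, rfl⟩ hab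
    have := hammingDist_oWord_le (x := τ a) (hstar b hb)
    rw [ho a ha, ho b hb] at this
    have := hdist a ha b hb (fun h => hab (h ▸ rfl))
    omega
  · rw [image_image]
    refine eq_of_subset_of_card_le (by simpa [subset_iff] using he) ?_
    rw [card_image_of_injOn heinj, hcard]
  · rw [image_image]
    exact (image_congr (g := id) fun a ha => ho a ha).trans image_id

theorem combine_even_odd_codes (m n : ℕ) (hn : n = 2 ^ m)
    (C0 C1 : Finset (Fin n → Fin 2))
    (hC0card : C0.card = 2 ^ (n - 1) / n)
    (hC0dist : ∀ x ∈ C0, ∀ y ∈ C0, x ≠ y → 4 ≤ hammingDist x y)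
    (hC0even : ∀ x ∈ C0, wt x % 2 = 0)
    (hC1card : C1.card = 2 ^ (n - 1) / n)
    (hC1dist : ∀ x ∈ C1, ∀ y ∈ C1, x ≠ y → 4 ≤ hammingDist x y)
    (hC1odd : ∀ x ∈ C1, wt x % 2 = 1) :
    ∃ C : Finset (Fin n → Fin 3),
      (∀ x ∈ C, exactlyOneStar x) ∧
      C.card = 2 ^ (n - 1) / n ∧
      (∀ x ∈ C, ∀ y ∈ C, x ≠ y → 3 ≤ hammingDist x y) ∧
      C.image eWord = C0 ∧ C.image oWord = C1 := by
  have hC0cover : #C0 * n = 2 ^ (n - 1) := by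
    rw [hC0card, hn]
    exact Nat.div_mul_cancel (pow_dvd_pow 2 (Nat.le_sub_one_of_lt Nat.lt_two_pow_self))
  have hC0dist' : ∀ x ∈ C0, ∀ y ∈ C0, x ≠ y → 3 ≤ hammingDist x y :=
    fun x hx y hy hxy => (hC0dist x hx y hy hxy).trans' (by norm_num)
  obtain ⟨C, hstar, hcard, hdist, he, ho⟩ := exists_code_of_lifts hC1dist
    (hC0card.trans hC1card.symm)
    fun y hy => exists_eWord_mem_oWord_eq hC0even hC0dist' hC0cover (hC1odd y hy)
  exact ⟨C, hstar, hcard.trans hC1card, hdist, he, ho⟩
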